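/- arXiv:0911.0353 — 3 statements merged into one kernel-verified Lean document; each statement's English description precedes it below -/
import Mathlib

section
/- Let a < T be real numbers and let f : ℝ × ℝ × ℝ × ℝ → ℝ, (t, y, v, z) ↦ f(t, y, v, z), be continuously differentiable. Suppose ỹ ∈ C¹([a,T], ℝ) is a local extremizer (a local minimizer or local maximizer with respect to the C¹ norm) of J[y] = ∫_a^T f(t, y(t), y'(t), y(T)) dt among all y ∈ C¹([a,T], ℝ) with y(a) = ỹ(a). Then for every h ∈ C¹([a,T], ℝ) with h(a) = 0 one has ∫_a^T [ f_y(t, ỹ(t), ỹ'(t), ỹ(T)) h(t) + f_v(t, ỹ(t), ỹ'(t), ỹ(T)) h'(t) + f_z(t, ỹ(t), ỹ'(t), ỹ(T)) h(T) ] dt = 0. -/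
open Set intervalIntegral

/-- Partial derivative of `f (t, y, v, z)` with respect to the second argument `y`. -/
noncomputable def fy (f : ℝ → ℝ → ℝ → ℝ → ℝ) (t y v z : ℝ) : ℝ :=
  deriv (fun s => f t s v z) y

/-- Partial derivative of `f (t, y, v, z)` with respect to the third argument `v`. -/
noncomputable def fv (f : ℝ → ℝ → ℝ → ℝ → ℝ) (t y v z : ℝ) : ℝ :=
  deriv (fun s => f t y s z) v

/-- Partial derivative of `f (t, y, v, z)` with respect to the fourth argument `z`. -/
noncomputable def fz (f : ℝ → ℝ → ℝ → ℝ → ℝ) (t y v z : ℝ) : ℝ :=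
  deriv (fun s => f t y v s) z

/-!
Fix a direction `h ∈ C¹` with `h a = 0`. The curves `ỹ + s • h` start at `ỹ a` and are `C¹`-close
to `ỹ` for small `s`, so `s ↦ J[ỹ + s • h]` has a local extremum at `0`. The `s`-derivative of the
integrand is continuous in `(s, t)`, hence bounded on a compact set, which justifies
differentiating under the integral sign; the derivative at `0` is the integral in question.
-/

open Filter Topology MeasureTheory

theorem fderiv_apply_eq_deriv_add_smul {E : Type*} [NormedAddCommGroup E] [NormedSpace ℝ E]
    {F : E → ℝ} {p : E} (hF : DifferentiableAt ℝ F p) (w : E) :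
    fderiv ℝ F p w = deriv (fun s : ℝ => F (p + s • w)) 0 := by
  have hline : HasDerivAt (fun s : ℝ => p + s • w) w 0 := by
    simpa using ((hasDerivAt_id (0 : ℝ)).smul_const w).const_add p
  have hF' : HasFDerivAt F (fderiv ℝ F p) (p + (0 : ℝ) • w) := by simpa using hF.hasFDerivAt
  exact (hF'.comp_hasDerivAt 0 hline).deriv.symm

theorem fderiv_uncurry_apply_eq_fy_fv_fz {f : ℝ → ℝ → ℝ → ℝ → ℝ} {t y v z : ℝ}
    (hf : DifferentiableAt ℝ (fun p : ℝ × ℝ × ℝ × ℝ => f p.1 p.2.1 p.2.2.1 p.2.2.2) (t, y, v, z))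
    (b c d : ℝ) :
    fderiv ℝ (fun p : ℝ × ℝ × ℝ × ℝ => f p.1 p.2.1 p.2.2.1 p.2.2.2) (t, y, v, z) (0, b, c, d)
      = fy f t y v z * b + fv f t y v z * c + fz f t y v z * d := by
  have hvec : ((0 : ℝ), b, c, d) = b • ((0 : ℝ), (1 : ℝ), (0 : ℝ), (0 : ℝ))
      + c • ((0 : ℝ), (0 : ℝ), (1 : ℝ), (0 : ℝ)) + d • ((0 : ℝ), (0 : ℝ), (0 : ℝ), (1 : ℝ)) := by
    simp
  rw [hvec, map_add, map_add, map_smul, map_smul, map_smul, fderiv_apply_eq_deriv_add_smul hf,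
    fderiv_apply_eq_deriv_add_smul hf, fderiv_apply_eq_deriv_add_smul hf]
  simp only [Prod.smul_mk, smul_eq_mul, mul_zero, mul_one, Prod.mk_add_mk, add_zero,
    deriv_comp_const_add (fun s => f t s v z) y, deriv_comp_const_add (fun s => f t y s z) v,
    deriv_comp_const_add (f t y v) z, fy, fv, fz]
  ring

theorem hasDerivAt_intervalIntegral_comp_add_smul {E : Type*} [NormedAddCommGroup E]
    [NormedSpace ℝ E] {F : E → ℝ} (hF : ContDiff ℝ 1 F) {γ η : ℝ → E} (hγ : Continuous γ)
    (hη : Continuous η) (a b : ℝ) :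
    HasDerivAt (fun s : ℝ => ∫ t in a..b, F (γ t + s • η t))
      (∫ t in a..b, fderiv ℝ F (γ t) (η t)) 0 := by
  have hline : ∀ s t : ℝ, HasDerivAt (fun s : ℝ => γ t + s • η t) (η t) s := fun s t => by
    simpa using ((hasDerivAt_id s).smul_const (η t)).const_add (γ t)
  have hΦ : Continuous fun q : ℝ × ℝ => γ q.2 + q.1 • η q.2 := by fun_prop
  have hF' : Continuous fun q : ℝ × ℝ => fderiv ℝ F (γ q.2 + q.1 • η q.2) (η q.2) :=
    ((hF.continuous_fderiv one_ne_zero).comp hΦ).clm_apply (hη.comp continuous_snd)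
  obtain ⟨C, hC⟩ := (isCompact_Icc.prod isCompact_uIcc).exists_bound_of_continuousOn
    (s := Icc (-1 : ℝ) 1 ×ˢ uIcc a b) hF'.continuousOn
  have hmain := intervalIntegral.hasDerivAt_integral_of_dominated_loc_of_deriv_le
    (F := fun s t => F (γ t + s • η t)) (F' := fun s t => fderiv ℝ F (γ t + s • η t) (η t))
    (bound := fun _ => C) (x₀ := 0) (μ := volume) (a := a) (b := b)
    (Metric.ball_mem_nhds 0 one_pos)
    (Eventually.of_forall fun s =>
      (hF.continuous.comp (hΦ.comp (Continuous.prodMk_right s))).aestronglyMeasurable)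
    ((hF.continuous.comp (hΦ.comp (Continuous.prodMk_right 0))).intervalIntegrable a b)
    (hF'.comp (Continuous.prodMk_right 0)).aestronglyMeasurable
    (Eventually.of_forall fun t ht s hs => hC (s, t)
      ⟨by simpa [abs_le] using (mem_ball_zero_iff.mp hs).le, uIoc_subset_uIcc ht⟩)
    intervalIntegrable_const
    (Eventually.of_forall fun t _ s _ =>
      (hF.differentiable one_ne_zero _).hasFDerivAt.comp_hasDerivAt s (hline s t))
  simpa using hmain.2

theorem eventually_forall_abs_mul_lt {X : Type*} [TopologicalSpace X] {K : Set X}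
    (hK : IsCompact K) {u : X → ℝ} (hu : Continuous u) {ε : ℝ} (hε : 0 < ε) :
    ∀ᶠ s in 𝓝 (0 : ℝ), ∀ x ∈ K, |s * u x| < ε :=
  hK.eventually_forall_of_forall_eventually fun x _ =>
    ((continuous_fst.mul (hu.comp continuous_snd)).abs.continuousAt
      (x := ((0 : ℝ), x))).eventually_lt continuousAt_const (by simpa using hε)

theorem first_variation_vanishes_at_extremizer_general
    (a T : ℝ)
    (f : ℝ → ℝ → ℝ → ℝ → ℝ)
    (hf : ContDiff ℝ 1 (fun p : ℝ × ℝ × ℝ × ℝ => f p.1 p.2.1 p.2.2.1 p.2.2.2))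
    (ytil : ℝ → ℝ) (hy : ContDiff ℝ 1 ytil)
    (hext : ∃ ε > 0,
      ((∀ y : ℝ → ℝ, ContDiff ℝ 1 y → y a = ytil a →
          (∀ t ∈ Icc a T, |y t - ytil t| < ε ∧ |deriv y t - deriv ytil t| < ε) →
          (∫ t in a..T, f t (y t) (deriv y t) (y T)) ≤
            ∫ t in a..T, f t (ytil t) (deriv ytil t) (ytil T)) ∨
        (∀ y : ℝ → ℝ, ContDiff ℝ 1 y → y a = ytil a →
          (∀ t ∈ Icc a T, |y t - ytil t| < ε ∧ |deriv y t - deriv ytil t| < ε) →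
          (∫ t in a..T, f t (ytil t) (deriv ytil t) (ytil T)) ≤
            ∫ t in a..T, f t (y t) (deriv y t) (y T)))) :
    ∀ h : ℝ → ℝ, ContDiff ℝ 1 h → h a = 0 →
      (∫ t in a..T,
        fy f t (ytil t) (deriv ytil t) (ytil T) * h t
          + fv f t (ytil t) (deriv ytil t) (ytil T) * deriv h t
          + fz f t (ytil t) (deriv ytil t) (ytil T) * h T) = 0 := by
  intro h hh ha0
  obtain ⟨ε, hε, hext⟩ := hext
  set J : (ℝ → ℝ) → ℝ := fun y => ∫ t in a..T, f t (y t) (deriv y t) (y T)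
  set y : ℝ → ℝ → ℝ := fun s t => ytil t + s * h t
  have hy_deriv : ∀ s t, deriv (y s) t = deriv ytil t + s * deriv h t := fun s t =>
    ((hy.differentiable one_ne_zero t).hasDerivAt.add
      ((hh.differentiable one_ne_zero t).hasDerivAt.const_mul s)).deriv
  have hJ_deriv : HasDerivAt (fun s => J (y s))
      (∫ t in a..T, fderiv ℝ (fun p : ℝ × ℝ × ℝ × ℝ => f p.1 p.2.1 p.2.2.1 p.2.2.2)
        (t, ytil t, deriv ytil t, ytil T) (0, h t, deriv h t, h T)) 0 := by
    have hγ : Continuous fun t => ((t, ytil t, deriv ytil t, ytil T) : ℝ × ℝ × ℝ × ℝ) :=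
      continuous_id.prodMk (hy.continuous.prodMk
        ((hy.continuous_deriv le_rfl).prodMk continuous_const))
    have hη : Continuous fun t => ((0, h t, deriv h t, h T) : ℝ × ℝ × ℝ × ℝ) :=
      continuous_const.prodMk (hh.continuous.prodMk
        ((hh.continuous_deriv le_rfl).prodMk continuous_const))
    convert hasDerivAt_intervalIntegral_comp_add_smul hf hγ hη a T using 1
    ext s
    simp [J, y, hy_deriv]
  have hnear : ∀ᶠ s in 𝓝 0, ∀ t ∈ Icc a T,
      |y s t - ytil t| < ε ∧ |deriv (y s) t - deriv ytil t| < ε := by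
    filter_upwards [eventually_forall_abs_mul_lt isCompact_Icc hh.continuous hε,
      eventually_forall_abs_mul_lt isCompact_Icc (hh.continuous_deriv le_rfl) hε]
      with s hs hs' t ht
    simpa [y, hy_deriv] using And.intro (hs t ht) (hs' t ht)
  have hadm : ∀ s, ContDiff ℝ 1 (y s) ∧ y s a = ytil a := fun s =>
    ⟨hy.add (contDiff_const.mul hh), by simp [y, ha0]⟩
  have hextr : IsLocalExtr (fun s => J (y s)) 0 := by
    rcases hext with hmax | hmin
    · exact Or.inr (hnear.mono fun s hs => by simpa [J, y] using hmax _ (hadm s).1 (hadm s).2 hs)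
    · exact Or.inl (hnear.mono fun s hs => by simpa [J, y] using hmin _ (hadm s).1 (hadm s).2 hs)
  rw [← hextr.hasDerivAt_eq_zero hJ_deriv]
  refine intervalIntegral.integral_congr fun t _ => ?_
  rw [fderiv_uncurry_apply_eq_fy_fv_fz (hf.differentiable one_ne_zero _)]

/-- At a local `C¹` extremizer `ỹ` of `J[y] = ∫_a^T f (t, y t, y' t, y T) dt` (among `C¹`
functions with the same initial value), the first variation vanishes in every direction
`h ∈ C¹` with `h a = 0`. -/
theorem first_variation_vanishes_at_extremizer
    (a T : ℝ) (haT : a < T)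
    (f : ℝ → ℝ → ℝ → ℝ → ℝ)
    (hf : ContDiff ℝ 1 (fun p : ℝ × ℝ × ℝ × ℝ => f p.1 p.2.1 p.2.2.1 p.2.2.2))
    (ytil : ℝ → ℝ) (hy : ContDiff ℝ 1 ytil)
    (hext : ∃ ε > 0,
      ((∀ y : ℝ → ℝ, ContDiff ℝ 1 y → y a = ytil a →
          (∀ t ∈ Icc a T, |y t - ytil t| < ε ∧ |deriv y t - deriv ytil t| < ε) →
          (∫ t in a..T, f t (y t) (deriv y t) (y T)) ≤
            ∫ t in a..T, f t (ytil t) (deriv ytil t) (ytil T)) ∨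
        (∀ y : ℝ → ℝ, ContDiff ℝ 1 y → y a = ytil a →
          (∀ t ∈ Icc a T, |y t - ytil t| < ε ∧ |deriv y t - deriv ytil t| < ε) →
          (∫ t in a..T, f t (ytil t) (deriv ytil t) (ytil T)) ≤
            ∫ t in a..T, f t (y t) (deriv y t) (y T)))) :
    ∀ h : ℝ → ℝ, ContDiff ℝ 1 h → h a = 0 →
      (∫ t in a..T,
        fy f t (ytil t) (deriv ytil t) (ytil T) * h t
          + fv f t (ytil t) (deriv ytil t) (ytil T) * deriv h t
          + fz f t (ytil t) (deriv ytil t) (ytil T) * h T) = 0 :=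
  first_variation_vanishes_at_extremizer_general a T f hf ytil hy hext
end

section
/- Let a < T be real numbers, let f : ℝ × ℝ × ℝ × ℝ → ℝ, (t, y, v, z) ↦ f(t, y, v, z), be continuously differentiable, and let ỹ ∈ C¹([a,T], ℝ) be such that the map t ↦ f_v(t, ỹ(t), ỹ'(t), ỹ(T)) is continuously differentiable on [a,T]. If ∫_a^T [ f_y(t, ỹ(t), ỹ'(t), ỹ(T)) h(t) + f_v(t, ỹ(t), ỹ'(t), ỹ(T)) h'(t) ] dt = 0 for every h ∈ C¹([a,T], ℝ) with h(a) = h(T) = 0, then d/dt f_v(t, ỹ(t), ỹ'(t), ỹ(T)) = f_y(t, ỹ(t), ỹ'(t), ỹ(T)) for all t ∈ [a,T]. -/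
open Set intervalIntegral

/-!
Integrating by parts against a variation vanishing at both endpoints turns the first variation
into `∫ (f_y - d/dt f_v) h`. The integrand is continuous on `[a, T]`, so if this vanishes for
every such `h` it vanishes almost everywhere on `(a, T)` (test against smooth bumps supported
there), hence everywhere on `[a, T]` by continuity.
-/

open MeasureTheory

theorem fy_eq_fderiv_apply {f : ℝ → ℝ → ℝ → ℝ → ℝ}
    (hf : Differentiable ℝ (fun p : ℝ × ℝ × ℝ × ℝ => f p.1 p.2.1 p.2.2.1 p.2.2.2))
    (t y v z : ℝ) :
    fy f t y v z
      = fderiv ℝ (fun p : ℝ × ℝ × ℝ × ℝ => f p.1 p.2.1 p.2.2.1 p.2.2.2) (t, y, v, z) (0, 1, 0, 0) := by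
  have hline : HasDerivAt (fun s : ℝ => ((t, s, v, z) : ℝ × ℝ × ℝ × ℝ)) (0, 1, 0, 0) y :=
    (hasDerivAt_const y t).prodMk <| (hasDerivAt_id y).prodMk <|
      (hasDerivAt_const y v).prodMk (hasDerivAt_const y z)
  exact ((hf (t, y, v, z)).hasFDerivAt.comp_hasDerivAt y hline).deriv

theorem continuous_fy {f : ℝ → ℝ → ℝ → ℝ → ℝ}
    (hf : ContDiff ℝ 1 (fun p : ℝ × ℝ × ℝ × ℝ => f p.1 p.2.1 p.2.2.1 p.2.2.2)) :
    Continuous (fun p : ℝ × ℝ × ℝ × ℝ => fy f p.1 p.2.1 p.2.2.1 p.2.2.2) := by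
  simp only [fy_eq_fderiv_apply (hf.differentiable one_ne_zero)]
  exact (hf.continuous_fderiv one_ne_zero).clm_apply continuous_const

theorem integral_mul_deriv_eq_neg_integral_deriv_mul {a b : ℝ} (hab : a ≤ b) {F φ : ℝ → ℝ}
    (hF : ∀ t ∈ Icc a b, DifferentiableAt ℝ F t) (hF' : ContinuousOn (deriv F) (Icc a b))
    (hφ : ContDiff ℝ 1 φ) (hφa : φ a = 0) (hφb : φ b = 0) :
    ∫ t in a..b, F t * deriv φ t = -∫ t in a..b, deriv F t * φ t := by
  rw [integral_mul_deriv_eq_deriv_mul (fun t ht => (hF t (uIcc_of_le hab ▸ ht)).hasDerivAt)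
    (fun t _ => (hφ.differentiable one_ne_zero t).hasDerivAt)
    (hF'.intervalIntegrable_of_Icc hab) ((hφ.continuous_deriv le_rfl).intervalIntegrable _ _),
    hφa, hφb]
  ring

theorem integral_mul_add_mul_deriv_eq {a b : ℝ} (hab : a ≤ b) {g F φ : ℝ → ℝ}
    (hg : Continuous g)
    (hF : ∀ t ∈ Icc a b, DifferentiableAt ℝ F t) (hF' : ContinuousOn (deriv F) (Icc a b))
    (hφ : ContDiff ℝ 1 φ) (hφa : φ a = 0) (hφb : φ b = 0) :
    ∫ t in a..b, g t * φ t + F t * deriv φ t = ∫ t in a..b, (g t - deriv F t) * φ t := by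
  have hFc : ContinuousOn F (Icc a b) := fun t ht => (hF t ht).continuousAt.continuousWithinAt
  have hgφ : IntervalIntegrable (fun t => g t * φ t) volume a b :=
    (hg.mul hφ.continuous).intervalIntegrable a b
  have hFφ' : IntervalIntegrable (fun t => F t * deriv φ t) volume a b :=
    (hFc.mul (hφ.continuous_deriv le_rfl).continuousOn).intervalIntegrable_of_Icc hab
  have hF'φ : IntervalIntegrable (fun t => deriv F t * φ t) volume a b :=
    (hF'.mul hφ.continuous.continuousOn).intervalIntegrable_of_Icc hab
  simp only [sub_mul]
  rw [integral_add hgφ hFφ', integral_sub hgφ hF'φ,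
    integral_mul_deriv_eq_neg_integral_deriv_mul hab hF hF' hφ hφa hφb, sub_eq_add_neg]

theorem eqOn_zero_of_forall_integral_mul_eq_zero {a b : ℝ} (hab : a < b) {G : ℝ → ℝ}
    (hG : ContinuousOn G (Icc a b))
    (h : ∀ φ : ℝ → ℝ, ContDiff ℝ 1 φ → φ a = 0 → φ b = 0 → ∫ t in a..b, G t * φ t = 0) :
    EqOn G 0 (Icc a b) := by
  have hae : ∀ᵐ t, t ∈ Ioo a b → G t = 0 := by
    refine isOpen_Ioo.ae_eq_zero_of_integral_contDiff_smul_eq_zero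
      ((hG.mono Ioo_subset_Icc_self).locallyIntegrableOn measurableSet_Ioo)
      fun φ hφ _ hsupp => ?_
    have hφ_out : ∀ t ∉ Ioo a b, φ t = 0 := fun t ht =>
      image_eq_zero_of_notMem_tsupport fun h' => ht (hsupp h')
    have hφa : φ a = 0 := hφ_out a (by simp)
    have hφb : φ b = 0 := hφ_out b (by simp)
    calc ∫ t, φ t • G t = ∫ t in Ioc a b, G t * φ t := by
          rw [setIntegral_eq_integral_of_forall_compl_eq_zero]
          · simp only [smul_eq_mul, mul_comm]
          · intro t ht
            simp [hφ_out t (fun h' => ht (Ioo_subset_Ioc_self h'))]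
      _ = 0 := by rw [← integral_of_le hab.le]; exact h φ (hφ.of_le (by norm_num)) hφa hφb
  have hIoo : EqOn G 0 (Ioo a b) :=
    Measure.eqOn_open_of_ae_eq ((ae_restrict_iff' measurableSet_Ioo).2 hae) isOpen_Ioo
      (hG.mono Ioo_subset_Icc_self) continuousOn_const
  exact hIoo.of_subset_closure hG continuousOn_const Ioo_subset_Icc_self
    (by rw [closure_Ioo hab.ne])

/-- Euler–Lagrange equation: if the first variation vanishes for all `C¹` variations `h`
with `h a = h T = 0`, then `d/dt f_v(t, ỹ t, ỹ' t, ỹ T) = f_y(t, ỹ t, ỹ' t, ỹ T)`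
on `[a, T]`. -/
theorem euler_lagrange_from_vanishing_first_variation
    (a T : ℝ) (haT : a < T)
    (f : ℝ → ℝ → ℝ → ℝ → ℝ)
    (hf : ContDiff ℝ 1 (fun p : ℝ × ℝ × ℝ × ℝ => f p.1 p.2.1 p.2.2.1 p.2.2.2))
    (ytil : ℝ → ℝ) (hy : ContDiff ℝ 1 ytil)
    (hFdiff : ∀ t ∈ Icc a T,
      DifferentiableAt ℝ (fun s => fv f s (ytil s) (deriv ytil s) (ytil T)) t)
    (hFcont : ContinuousOn
      (deriv (fun s => fv f s (ytil s) (deriv ytil s) (ytil T))) (Icc a T))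
    (hvar : ∀ h : ℝ → ℝ, ContDiff ℝ 1 h → h a = 0 → h T = 0 →
      (∫ t in a..T,
        fy f t (ytil t) (deriv ytil t) (ytil T) * h t
          + fv f t (ytil t) (deriv ytil t) (ytil T) * deriv h t) = 0) :
    ∀ t ∈ Icc a T,
      deriv (fun s => fv f s (ytil s) (deriv ytil s) (ytil T)) t
        = fy f t (ytil t) (deriv ytil t) (ytil T) := by
  set F := fun s => fv f s (ytil s) (deriv ytil s) (ytil T)
  have hfy : Continuous fun t => fy f t (ytil t) (deriv ytil t) (ytil T) :=
    (continuous_fy hf).comp <| continuous_id.prodMk <| hy.continuous.prodMk <|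
      (hy.continuous_deriv le_rfl).prodMk continuous_const
  have hEL : EqOn (fun t => fy f t (ytil t) (deriv ytil t) (ytil T) - deriv F t) 0 (Icc a T) :=
    eqOn_zero_of_forall_integral_mul_eq_zero haT (hfy.continuousOn.sub hFcont)
      fun h hh ha hT => by
        rw [← integral_mul_add_mul_deriv_eq haT.le hfy hFdiff hFcont hh ha hT]
        exact hvar h hh ha hT
  exact fun t ht => (sub_eq_zero.1 (hEL ht)).symm
end

section
/- Let a < T be real numbers, let f : ℝ × ℝ × ℝ × ℝ → ℝ, (t, y, v, z) ↦ f(t, y, v, z), be continuously differentiable, and let ỹ ∈ C¹([a,T], ℝ) be such that the map t ↦ f_v(t, ỹ(t), ỹ'(t), ỹ(T)) is continuously differentiable on [a,T] and the Euler–Lagrange equation d/dt f_v(t, ỹ(t), ỹ'(t), ỹ(T)) = f_y(t, ỹ(t), ỹ'(t), ỹ(T)) holds on [a,T]. If moreover ∫_a^T [ f_y(t, ỹ(t), ỹ'(t), ỹ(T)) h(t) + f_v(t, ỹ(t), ỹ'(t), ỹ(T)) h'(t) + f_z(t, ỹ(t), ỹ'(t), ỹ(T)) h(T) ] dt = 0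 for every h ∈ C¹([a,T], ℝ) with h(a) = 0, then f_v(T, ỹ(T), ỹ'(T), ỹ(T)) + ∫_a^T f_z(t, ỹ(t), ỹ'(t), ỹ(T)) dt = 0. -/
open Set intervalIntegral

/-!
Test the vanishing first variation with `h t = t - a`. By the Euler–Lagrange equation the first
two terms of the integrand become `(F t * (t - a))'` with `F t = f_v(t, ỹ t, ỹ' t, ỹ T)`, so
the integral equals `(T - a) * (F T + ∫_a^T f_z)`, and `T - a ≠ 0`.
-/

section PartialDerivatives

variable {f : ℝ → ℝ → ℝ → ℝ → ℝ} {t y v z : ℝ}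

lemma fy_eq_fderiv
    (hf : DifferentiableAt ℝ (fun p : ℝ × ℝ × ℝ × ℝ => f p.1 p.2.1 p.2.2.1 p.2.2.2) (t, y, v, z)) :
    fy f t y v z
      = fderiv ℝ (fun p : ℝ × ℝ × ℝ × ℝ => f p.1 p.2.1 p.2.2.1 p.2.2.2) (t, y, v, z)
          (0, 1, 0, 0) := by
  exact (hf.hasFDerivAt.comp_hasDerivAt y ((hasDerivAt_const y t).prodMk
    ((hasDerivAt_id y).prodMk ((hasDerivAt_const y v).prodMk (hasDerivAt_const y z))))).deriv

lemma fz_eq_fderiv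
    (hf : DifferentiableAt ℝ (fun p : ℝ × ℝ × ℝ × ℝ => f p.1 p.2.1 p.2.2.1 p.2.2.2) (t, y, v, z)) :
    fz f t y v z
      = fderiv ℝ (fun p : ℝ × ℝ × ℝ × ℝ => f p.1 p.2.1 p.2.2.1 p.2.2.2) (t, y, v, z)
          (0, 0, 0, 1) := by
  exact (hf.hasFDerivAt.comp_hasDerivAt z ((hasDerivAt_const z t).prodMk
    ((hasDerivAt_const z y).prodMk ((hasDerivAt_const z v).prodMk (hasDerivAt_id z))))).deriv

end PartialDerivatives

lemma continuous_fderiv_apply_comp {E X : Type*} [NormedAddCommGroup E] [NormedSpace ℝ E]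
    [TopologicalSpace X] {Φ : E → ℝ} (hΦ : ContDiff ℝ 1 Φ) {γ : X → E} (hγ : Continuous γ)
    (d : E) : Continuous fun x => fderiv ℝ Φ (γ x) d :=
  ((hΦ.continuous_fderiv one_ne_zero).comp hγ).clm_apply continuous_const

section AlongCurve

variable {f : ℝ → ℝ → ℝ → ℝ → ℝ} {y : ℝ → ℝ}

lemma continuous_curve_of_contDiff (hy : ContDiff ℝ 1 y) (c : ℝ) :
    Continuous fun t => (t, y t, deriv y t, c) :=
  continuous_id.prodMk (hy.continuous.prodMk ((hy.continuous_deriv le_rfl).prodMk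
    continuous_const))

lemma continuous_fy_along
    (hf : ContDiff ℝ 1 (fun p : ℝ × ℝ × ℝ × ℝ => f p.1 p.2.1 p.2.2.1 p.2.2.2))
    (hy : ContDiff ℝ 1 y) (c : ℝ) :
    Continuous fun t => fy f t (y t) (deriv y t) c := by
  simpa only [fy_eq_fderiv (hf.differentiable one_ne_zero _)] using
    continuous_fderiv_apply_comp hf (continuous_curve_of_contDiff hy c) (0, 1, 0, 0)

lemma continuous_fz_along
    (hf : ContDiff ℝ 1 (fun p : ℝ × ℝ × ℝ × ℝ => f p.1 p.2.1 p.2.2.1 p.2.2.2))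
    (hy : ContDiff ℝ 1 y) (c : ℝ) :
    Continuous fun t => fz f t (y t) (deriv y t) c := by
  simpa only [fz_eq_fderiv (hf.differentiable one_ne_zero _)] using
    continuous_fderiv_apply_comp hf (continuous_curve_of_contDiff hy c) (0, 0, 0, 1)

end AlongCurve

section LinearVariation

variable {F F' : ℝ → ℝ} {a b : ℝ}

lemma continuousOn_deriv_mul_sub_add (hF : ∀ t ∈ uIcc a b, HasDerivAt F (F' t) t)
    (hF' : ContinuousOn F' (uIcc a b)) :
    ContinuousOn (fun t => F' t * (t - a) + F t) (uIcc a b) :=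
  (hF'.mul (continuousOn_id.sub continuousOn_const)).add (HasDerivAt.continuousOn hF)

lemma integral_deriv_mul_sub_add (hF : ∀ t ∈ uIcc a b, HasDerivAt F (F' t) t)
    (hF' : ContinuousOn F' (uIcc a b)) :
    ∫ t in a..b, (F' t * (t - a) + F t) = F b * (b - a) := by
  have hprod : ∀ t ∈ uIcc a b, HasDerivAt (fun s => F s * (s - a)) (F' t * (t - a) + F t) t :=
    fun t ht => by simpa only [mul_one] using (hF t ht).fun_mul ((hasDerivAt_id' t).sub_const a)
  rw [integral_eq_sub_of_hasDerivAt hprod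
    (continuousOn_deriv_mul_sub_add hF hF').intervalIntegrable]
  simp

lemma add_integral_eq_zero_of_integral_linear_variation {Z : ℝ → ℝ} (hab : a < b)
    (hF : ∀ t ∈ uIcc a b, HasDerivAt F (F' t) t) (hF' : ContinuousOn F' (uIcc a b))
    (hZ : IntervalIntegrable Z MeasureTheory.volume a b)
    (hvar : ∫ t in a..b, (F' t * (t - a) + F t + Z t * (b - a)) = 0) :
    F b + ∫ t in a..b, Z t = 0 := by
  rw [integral_add (continuousOn_deriv_mul_sub_add hF hF').intervalIntegrable (hZ.mul_const _),
    integral_deriv_mul_sub_add hF hF', intervalIntegral.integral_mul_const, ← add_mul] at hvar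
  exact (mul_eq_zero.mp hvar).resolve_right (sub_ne_zero.mpr hab.ne')

end LinearVariation

theorem new_transversality_condition_general
    (a T : ℝ) (haT : a < T)
    (f : ℝ → ℝ → ℝ → ℝ → ℝ)
    (hf : ContDiff ℝ 1 (fun p : ℝ × ℝ × ℝ × ℝ => f p.1 p.2.1 p.2.2.1 p.2.2.2))
    (ytil : ℝ → ℝ) (hy : ContDiff ℝ 1 ytil)
    (hFdiff : ∀ t ∈ Icc a T,
      DifferentiableAt ℝ (fun s => fv f s (ytil s) (deriv ytil s) (ytil T)) t)
    (hEL : ∀ t ∈ Icc a T,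
      deriv (fun s => fv f s (ytil s) (deriv ytil s) (ytil T)) t
        = fy f t (ytil t) (deriv ytil t) (ytil T))
    (hvar : ∀ h : ℝ → ℝ, ContDiff ℝ 1 h → h a = 0 →
      (∫ t in a..T,
        fy f t (ytil t) (deriv ytil t) (ytil T) * h t
          + fv f t (ytil t) (deriv ytil t) (ytil T) * deriv h t
          + fz f t (ytil t) (deriv ytil t) (ytil T) * h T) = 0) :
    fv f T (ytil T) (deriv ytil T) (ytil T)
      + (∫ t in a..T, fz f t (ytil t) (deriv ytil t) (ytil T)) = 0 := by
  have hlinear := hvar (· - a) (contDiff_id.sub contDiff_const) (sub_self a)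
  simp only [deriv_sub_const, deriv_id'', mul_one] at hlinear
  refine add_integral_eq_zero_of_integral_linear_variation haT
    (fun t ht => by
      rw [uIcc_of_le haT.le] at ht
      exact hEL t ht ▸ (hFdiff t ht).hasDerivAt)
    (continuous_fy_along hf hy (ytil T)).continuousOn
    ((continuous_fz_along hf hy (ytil T)).intervalIntegrable a T) hlinear

/-- New natural boundary (transversality) condition: if the Euler–Lagrange equation holds
on `[a, T]` and the first variation vanishes for all `C¹` variations `h` with `h a = 0`,
then `f_v(T, ỹ T, ỹ' T, ỹ T) + ∫_a^T f_z(t, ỹ t, ỹ' t, ỹ T) dt = 0`. -/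
theorem new_transversality_condition
    (a T : ℝ) (haT : a < T)
    (f : ℝ → ℝ → ℝ → ℝ → ℝ)
    (hf : ContDiff ℝ 1 (fun p : ℝ × ℝ × ℝ × ℝ => f p.1 p.2.1 p.2.2.1 p.2.2.2))
    (ytil : ℝ → ℝ) (hy : ContDiff ℝ 1 ytil)
    (hFdiff : ∀ t ∈ Icc a T,
      DifferentiableAt ℝ (fun s => fv f s (ytil s) (deriv ytil s) (ytil T)) t)
    (hFcont : ContinuousOn
      (deriv (fun s => fv f s (ytil s) (deriv ytil s) (ytil T))) (Icc a T))
    (hEL : ∀ t ∈ Icc a T,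
      deriv (fun s => fv f s (ytil s) (deriv ytil s) (ytil T)) t
        = fy f t (ytil t) (deriv ytil t) (ytil T))
    (hvar : ∀ h : ℝ → ℝ, ContDiff ℝ 1 h → h a = 0 →
      (∫ t in a..T,
        fy f t (ytil t) (deriv ytil t) (ytil T) * h t
          + fv f t (ytil t) (deriv ytil t) (ytil T) * deriv h t
          + fz f t (ytil t) (deriv ytil t) (ytil T) * h T) = 0) :
    fv f T (ytil T) (deriv ytil T) (ytil T)
      + (∫ t in a..T, fz f t (ytil t) (deriv ytil t) (ytil T)) = 0 :=
  new_transversality_condition_general a T haT f hf ytil hy hFdiff hEL hvar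
end
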